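/- For every $i\in\mathbb{Z}/2n\mathbb{Z}$ and every choice of the constant $\gamma_i\in F$, the operator identities $e_{i+1}b_i=b_ie_{i+1}$ and $e_{i-1}b_i=b_ie_{i-1}$ hold on $V_{l,x}$ and also on $V^*_{l,x}$. -/

import Mathlib

/- Common setup: the quantum affine algebra U_q(A^{(1)}_{2n-1}) acting on symmetric
tensor representations V_{l,x} and their duals, coideal operators b_i, tensor products,
and the K matrix, following Kusano-Okado. -/

noncomputable section
namespace AII

open scoped TensorProduct Classical
open Finset

/-- The base field F = ℚ(q). -/
abbrev F : Type := RatFunc ℚ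

/-- The quantum parameter q. -/
def qq : F := RatFunc.X

/-- Quantum integer [a] = (q^a - q^{-a})/(q - q⁻¹). -/
def qint (a : ℤ) : F := (qq ^ a - qq ^ (-a)) / (qq - qq⁻¹)

/-- Quantum factorial [a]!. -/
def qfact (a : ℕ) : F := ∏ k ∈ Finset.range a, qint (k + 1)

/-- Quantum binomial coefficient. -/
def qbinom (j p : ℕ) : F := qfact j / (qfact p * qfact (j - p))

instance (n : ℕ) [NeZero n] : NeZero (2 * n) := ⟨by have := NeZero.ne n; omega⟩

/-- Helper instance: zero of a tensor product (works around a stuck instance search). -/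
noncomputable instance {R M N : Type*} [CommSemiring R] [AddCommMonoid M] [Module R M]
    [AddCommMonoid N] [Module R N] : Zero (TensorProduct R M N) :=
  (inferInstance : AddCommMonoid (TensorProduct R M N)).toZero

/-- Index set ℤ/2n for nodes of the Dynkin diagram / entries of weight vectors. -/
abbrev Zn (n : ℕ) := ZMod (2 * n)

/-- Membership in B_l : all entries nonnegative and summing to l. -/
def inB (n : ℕ) [NeZero n] (l : ℕ) (α : Zn n → ℤ) : Prop :=
  (∀ i, 0 ≤ α i) ∧ (∑ i, α i) = (l : ℤ)

/-- The vector space V_{l} with basis indexed by B_l. -/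
abbrev V (n : ℕ) [NeZero n] (l : ℕ) := {α : Zn n → ℤ // inB n l α} →₀ F

/-- Basis vector v_α, with the convention that it is 0 if α ∉ B_l
(in particular if α has a negative entry). -/
def vB (n : ℕ) [NeZero n] (l : ℕ) (α : Zn n → ℤ) : V n l :=
  if h : inB n l α then Finsupp.single ⟨α, h⟩ 1 else 0

/-- Helper: the linear operator sending v_α ↦ c(α) • v_{sh(α)}. -/
def opOf (n : ℕ) [NeZero n] (l : ℕ) (c : (Zn n → ℤ) → F)
    (sh : (Zn n → ℤ) → (Zn n → ℤ)) : V n l →ₗ[F] V n l :=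
  Finsupp.lsum F fun a => LinearMap.toSpanSingleton F (V n l) (c a.1 • vB n l (sh a.1))

/-- The i-th standard unit vector e_i of ℤ^{2n}. -/
def eu (n : ℕ) [NeZero n] (i : Zn n) : Zn n → ℤ := fun j => if j = i then 1 else 0

/-- Chevalley generator e_i on V_{l,x}. -/
def eOp (n : ℕ) [NeZero n] (l : ℕ) (x : F) (i : Zn n) : V n l →ₗ[F] V n l :=
  opOf n l (fun α => (if i = 0 then x else 1) * qint (α (i + 1)))
    (fun α => α + eu n i - eu n (i + 1))

/-- Chevalley generator f_i on V_{l,x}. -/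
def fOp (n : ℕ) [NeZero n] (l : ℕ) (x : F) (i : Zn n) : V n l →ₗ[F] V n l :=
  opOf n l (fun α => (if i = 0 then x⁻¹ else 1) * qint (α i))
    (fun α => α - eu n i + eu n (i + 1))

/-- Cartan generator k_i on V_{l,x}. -/
def kOp (n : ℕ) [NeZero n] (l : ℕ) (i : Zn n) : V n l →ₗ[F] V n l :=
  opOf n l (fun α => qq ^ (α i - α (i + 1))) id

/-- Inverse Cartan generator k_i⁻¹ on V_{l,x}. -/
def kInvOp (n : ℕ) [NeZero n] (l : ℕ) (i : Zn n) : V n l →ₗ[F] V n l :=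
  opOf n l (fun α => qq ^ (-(α i - α (i + 1)))) id

/-- e_i on the dual representation V^*_{l,x}. -/
def eSOp (n : ℕ) [NeZero n] (l : ℕ) (x : F) (i : Zn n) : V n l →ₗ[F] V n l :=
  opOf n l (fun α => (if i = 0 then x else 1) * qint (α i))
    (fun α => α - eu n i + eu n (i + 1))

/-- f_i on the dual representation V^*_{l,x}. -/
def fSOp (n : ℕ) [NeZero n] (l : ℕ) (x : F) (i : Zn n) : V n l →ₗ[F] V n l :=
  opOf n l (fun α => (if i = 0 then x⁻¹ else 1) * qint (α (i + 1)))
    (fun α => α + eu n i - eu n (i + 1))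

/-- k_i on the dual representation V^*_{l,x}. -/
def kSOp (n : ℕ) [NeZero n] (l : ℕ) (i : Zn n) : V n l →ₗ[F] V n l :=
  opOf n l (fun α => qq ^ (-(α i - α (i + 1)))) id

/-- k_i⁻¹ on the dual representation V^*_{l,x}. -/
def kSInvOp (n : ℕ) [NeZero n] (l : ℕ) (i : Zn n) : V n l →ₗ[F] V n l :=
  opOf n l (fun α => qq ^ (α i - α (i + 1))) id

/-- The coideal generator b_i built from families of operators e, f, k⁻¹:
b_i = f_i + γ_i (e_{i+1}e_{i-1}e_i - q⁻¹(e_{i+1}e_ie_{i-1}+e_{i-1}e_ie_{i+1})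
  + q⁻²e_ie_{i-1}e_{i+1}) k_i⁻¹. -/
def bOf (n : ℕ) [NeZero n] {M : Type*} [AddCommMonoid M] [Module F M]
    (e f kinv : Zn n → (M →ₗ[F] M)) (γ : Zn n → F) (i : Zn n) : M →ₗ[F] M :=
  f i + γ i • ((e (i + 1) ∘ₗ e (i - 1) ∘ₗ e i
      + (-qq⁻¹) • (e (i + 1) ∘ₗ e i ∘ₗ e (i - 1) + e (i - 1) ∘ₗ e i ∘ₗ e (i + 1))
      + (qq ^ (-2 : ℤ)) • (e i ∘ₗ e (i - 1) ∘ₗ e (i + 1))) ∘ₗ kinv i)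

/-- b_i on V_{l,x}. -/
def bOp (n : ℕ) [NeZero n] (l : ℕ) (x : F) (γ : Zn n → F) (i : Zn n) :
    V n l →ₗ[F] V n l :=
  bOf n (fun j => eOp n l x j) (fun j => fOp n l x j) (fun j => kInvOp n l j) γ i

/-- b_i on V^*_{l,x}. -/
def bSOp (n : ℕ) [NeZero n] (l : ℕ) (x : F) (γ : Zn n → F) (i : Zn n) :
    V n l →ₗ[F] V n l :=
  bOf n (fun j => eSOp n l x j) (fun j => fSOp n l x j) (fun j => kSInvOp n l j) γ i

/-- Coproduct action of e: E = e ⊗ 1 + k ⊗ e. -/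
def coE {M N : Type*} [AddCommGroup M] [Module F M] [AddCommGroup N] [Module F N]
    (e1 k1 : M →ₗ[F] M) (e2 : N →ₗ[F] N) : M ⊗[F] N →ₗ[F] M ⊗[F] N :=
  TensorProduct.map e1 LinearMap.id + TensorProduct.map k1 e2

/-- Coproduct action of f: F = f ⊗ k⁻¹ + 1 ⊗ f. -/
def coF {M N : Type*} [AddCommGroup M] [Module F M] [AddCommGroup N] [Module F N]
    (f1 : M →ₗ[F] M) (kinv2 f2 : N →ₗ[F] N) : M ⊗[F] N →ₗ[F] M ⊗[F] N :=
  TensorProduct.map f1 kinv2 + TensorProduct.map LinearMap.id f2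

/-- Coproduct action of k^{±1}: K = k ⊗ k. -/
def coK {M N : Type*} [AddCommGroup M] [Module F M] [AddCommGroup N] [Module F N]
    (k1 : M →ₗ[F] M) (k2 : N →ₗ[F] N) : M ⊗[F] N →ₗ[F] M ⊗[F] N :=
  TensorProduct.map k1 k2

/-- A bundle of operator families (e_i, f_i, k_i, k_i⁻¹) on a module. -/
structure Ops (n : ℕ) [NeZero n] (M : Type*) [AddCommGroup M] [Module F M] where
  e : Zn n → M →ₗ[F] M
  f : Zn n → M →ₗ[F] M
  k : Zn n → M →ₗ[F] M
  kinv : Zn n → M →ₗ[F] M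

/-- The operator bundle of V_{l,x}. -/
def VOps (n : ℕ) [NeZero n] (l : ℕ) (x : F) : Ops n (V n l) :=
  ⟨fun i => eOp n l x i, fun i => fOp n l x i, fun i => kOp n l i, fun i => kInvOp n l i⟩

/-- The operator bundle of V^*_{l,x}. -/
def VSOps (n : ℕ) [NeZero n] (l : ℕ) (x : F) : Ops n (V n l) :=
  ⟨fun i => eSOp n l x i, fun i => fSOp n l x i, fun i => kSOp n l i, fun i => kSInvOp n l i⟩

/-- Coproduct operator bundle on a tensor product of two representations. -/
def tensorOps {n : ℕ} [NeZero n] {M N : Type*} [AddCommGroup M] [Module F M]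
    [AddCommGroup N] [Module F N] (A : Ops n M) (B : Ops n N) : Ops n (M ⊗[F] N) where
  e := fun i => coE (A.e i) (A.k i) (B.e i)
  f := fun i => coF (A.f i) (B.kinv i) (B.f i)
  k := fun i => coK (A.k i) (B.k i)
  kinv := fun i => coK (A.kinv i) (B.kinv i)

/-- R intertwines the bundles A and B: R ∘ a = a ∘ R for all generators. -/
def Intertwines {n : ℕ} [NeZero n] {M N : Type*} [AddCommGroup M] [Module F M]
    [AddCommGroup N] [Module F N] (A : Ops n M) (B : Ops n N) (R : M →ₗ[F] N) : Prop :=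
  ∀ i : Zn n, R ∘ₗ A.e i = B.e i ∘ₗ R ∧ R ∘ₗ A.f i = B.f i ∘ₗ R ∧
    R ∘ₗ A.k i = B.k i ∘ₗ R ∧ R ∘ₗ A.kinv i = B.kinv i ∘ₗ R

/-- E_i on V_{l,x} ⊗ V_{m,y}. -/
def tE (n : ℕ) [NeZero n] (l m : ℕ) (x y : F) (i : Zn n) :
    V n l ⊗[F] V n m →ₗ[F] V n l ⊗[F] V n m := (tensorOps (VOps n l x) (VOps n m y)).e i

/-- F_i on V_{l,x} ⊗ V_{m,y}. -/
def tF (n : ℕ) [NeZero n] (l m : ℕ) (x y : F) (i : Zn n) :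
    V n l ⊗[F] V n m →ₗ[F] V n l ⊗[F] V n m := (tensorOps (VOps n l x) (VOps n m y)).f i

/-- K_i on V_{l,x} ⊗ V_{m,y}. -/
def tK (n : ℕ) [NeZero n] (l m : ℕ) (x y : F) (i : Zn n) :
    V n l ⊗[F] V n m →ₗ[F] V n l ⊗[F] V n m := (tensorOps (VOps n l x) (VOps n m y)).k i

/-- K_i⁻¹ on V_{l,x} ⊗ V_{m,y}. -/
def tKInv (n : ℕ) [NeZero n] (l m : ℕ) (x y : F) (i : Zn n) :
    V n l ⊗[F] V n m →ₗ[F] V n l ⊗[F] V n m := (tensorOps (VOps n l x) (VOps n m y)).kinv i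

/-- B_i on V_{l,x} ⊗ V_{m,y}. -/
def tB (n : ℕ) [NeZero n] (l m : ℕ) (x y : F) (γ : Zn n → F) (i : Zn n) :
    V n l ⊗[F] V n m →ₗ[F] V n l ⊗[F] V n m :=
  bOf n (fun j => tE n l m x y j) (fun j => tF n l m x y j) (fun j => tKInv n l m x y j) γ i

/-- The entry permutation σ^{(ε)}: switches α_{i-1} and α_i whenever i ≡ ε (mod 2),
i.e. pairs {ε+2k-1, ε+2k}. -/
def sigmaPerm (n : ℕ) [NeZero n] (ε : ℕ) (j : Zn n) : Zn n :=
  if (j - (ε : Zn n)).val % 2 = 1 then j + 1 else j - 1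

/-- Action of σ^{(ε)} on entry vectors. -/
def sigmaAct (n : ℕ) [NeZero n] (ε : ℕ) (α : Zn n → ℤ) : Zn n → ℤ :=
  fun j => α (sigmaPerm n ε j)

/-- The coefficient of the K matrix:
x^{ε(α_1-α_{2n})} ∏_{j=ε,ε+2,…,ε+2n-2} (-q⁻¹γ_j)^{-∑_{i=ε+1}^{j} α_i}. -/
def Kcoef (n : ℕ) [NeZero n] (x : F) (γ : Zn n → F) (ε : ℕ) (α : Zn n → ℤ) : F :=
  x ^ ((ε : ℤ) * (α 1 - α 0)) *
    ∏ k ∈ Finset.range n,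
      (-qq⁻¹ * γ ((ε : Zn n) + 2 * (k : Zn n))) ^
        (-(∑ r ∈ Finset.range (2 * k), α ((ε : Zn n) + 1 + (r : Zn n))))

/-- The explicit K matrix K(x) : V_{l,x} → V^*_{l,x⁻¹},
v_α ↦ Kcoef(α) v^*_{σ^{(ε)}(α)}. -/
def Kmap (n : ℕ) [NeZero n] (l : ℕ) (x : F) (γ : Zn n → F) (ε : ℕ) :
    V n l →ₗ[F] V n l :=
  opOf n l (fun α => Kcoef n x γ ε α) (sigmaAct n ε)

/-- The simplified K matrix (for γ_j = -q): v_α ↦ x^{ε(α_1-α_{2n})} v^*_{σ^{(ε)}(α)}. -/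
def KmapS (n : ℕ) [NeZero n] (l : ℕ) (x : F) (ε : ℕ) : V n l →ₗ[F] V n l :=
  opOf n l (fun α => x ^ ((ε : ℤ) * (α 1 - α 0))) (sigmaAct n ε)

/-- Cartan matrix of A^{(1)}_{2n-1}: a_{ij} = 2δ_{ij} - δ_{i,j+1} - δ_{i,j-1}. -/
def cartan (n : ℕ) [NeZero n] (i j : Zn n) : ℤ :=
  (if i = j then 2 else 0) - (if i = j + 1 then 1 else 0) - (if i = j - 1 then 1 else 0)

/- ### sl2 representations U_l -/

/-- The (l+1)-dimensional irreducible U_q(sl_2)-module U_l. -/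
abbrev UL (l : ℕ) := {p : ℕ × ℕ // p.1 + p.2 = l} →₀ F

/-- Basis vector u_{(a,b)} of U_l, zero when out of range. -/
def uB (l : ℕ) (a b : ℤ) : UL l :=
  if h : 0 ≤ a ∧ 0 ≤ b ∧ a.toNat + b.toNat = l then Finsupp.single ⟨(a.toNat, b.toNat), h.2.2⟩ 1
  else 0

/-- Helper for sl2 operators. -/
def slOf (l : ℕ) (c : ℕ × ℕ → F) (sh : ℕ × ℕ → ℤ × ℤ) : UL l →ₗ[F] UL l :=
  Finsupp.lsum F fun a => LinearMap.toSpanSingleton F (UL l) (c a.1 • uB l (sh a.1).1 (sh a.1).2)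

/-- e on U_l : u_{(a,b)} ↦ [b]u_{(a+1,b-1)}. -/
def esl (l : ℕ) : UL l →ₗ[F] UL l :=
  slOf l (fun p => qint p.2) (fun p => ((p.1 : ℤ) + 1, (p.2 : ℤ) - 1))

/-- f on U_l : u_{(a,b)} ↦ [a]u_{(a-1,b+1)}. -/
def fsl (l : ℕ) : UL l →ₗ[F] UL l :=
  slOf l (fun p => qint p.1) (fun p => ((p.1 : ℤ) - 1, (p.2 : ℤ) + 1))

/-- k on U_l. -/
def ksl (l : ℕ) : UL l →ₗ[F] UL l :=
  slOf l (fun p => qq ^ ((p.1 : ℤ) - (p.2 : ℤ))) (fun p => ((p.1 : ℤ), (p.2 : ℤ)))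

/-- k⁻¹ on U_l. -/
def kslInv (l : ℕ) : UL l →ₗ[F] UL l :=
  slOf l (fun p => qq ^ (-((p.1 : ℤ) - (p.2 : ℤ)))) (fun p => ((p.1 : ℤ), (p.2 : ℤ)))

/-- The highest weight vector w^{(l,m)}_j of U_{l+m-2j} ⊂ U_l ⊗ U_m. -/
def wsl (l m j : ℕ) : UL l ⊗[F] UL m :=
  ∑ p ∈ Finset.range (j + 1),
    ((-1 : F) ^ p * qq ^ ((p : ℤ) * ((l : ℤ) - p + 1)) * qbinom j p) •
      (uB l ((l : ℤ) - p) p ⊗ₜ[F] uB m ((m : ℤ) - j + p) ((j : ℤ) - p))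

/- ### The U(I_•)-highest weight vectors of V_l ⊗ V_m -/

/-- The index t ∈ {1,…,n} (0-based, in Fin n) of the sl2-pair containing
the entry position i : the pairs are {2t-1, 2t}. -/
def pairIdx (n : ℕ) [NeZero n] (i : Zn n) : Fin n :=
  if i.val % 2 = 1 then Fin.ofNat n (i.val / 2 : ℕ) else Fin.ofNat n ((i.val + 2 * n - 2) / 2 : ℕ)

/-- The entry vector α with α_{2t-1} = l_t - p_t, α_{2t} = p_t. -/
def alphaOf (n : ℕ) [NeZero n] (bl : Fin n → ℤ) (p : Fin n → ℕ) : Zn n → ℤ :=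
  fun i => if i.val % 2 = 1 then bl (pairIdx n i) - p (pairIdx n i) else (p (pairIdx n i) : ℤ)

/-- The entry vector β with β_{2t-1} = m_t - j_t + p_t, β_{2t} = j_t - p_t. -/
def betaOf (n : ℕ) [NeZero n] (bm bj : Fin n → ℤ) (p : Fin n → ℕ) : Zn n → ℤ :=
  fun i => if i.val % 2 = 1 then bm (pairIdx n i) - bj (pairIdx n i) + p (pairIdx n i)
    else bj (pairIdx n i) - p (pairIdx n i)

/-- Admissibility of a triple (𝒍, 𝒎, 𝒋). -/
def adm (n : ℕ) [NeZero n] (l m : ℕ) (bl bm bj : Fin n → ℤ) : Prop :=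
  (∀ t, 0 ≤ bl t) ∧ (∀ t, 0 ≤ bm t) ∧ (∑ t, bl t) = (l : ℤ) ∧ (∑ t, bm t) = (m : ℤ) ∧
    (∀ t, 0 ≤ bj t ∧ bj t ≤ min (bl t) (bm t))

/-- The U(I_•)-highest weight vector 𝒘^{(𝒍,𝒎)}_𝒋 ∈ V_{l,1} ⊗ V_{m,1},
zero when the triple is not admissible. -/
def wbig (n : ℕ) [NeZero n] (l m : ℕ) (bl bm bj : Fin n → ℤ) : V n l ⊗[F] V n m :=
  if adm n l m bl bm bj then
    ∑ p ∈ Fintype.piFinset (fun t => Finset.range ((bj t).toNat + 1)),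
      (∏ t, ((-1 : F) ^ (p t) * qq ^ ((p t : ℤ) * (bl t - p t + 1)) * qbinom (bj t).toNat (p t))) •
        (vB n l (alphaOf n bl p) ⊗ₜ[F] vB n m (betaOf n bm bj p))
  else (0 : V n l ⊗[F] V n m)

/-- The s-th standard unit vector of ℤ^n. -/
def eun (n : ℕ) [NeZero n] (s : Fin n) : Fin n → ℤ := fun t => if t = s then 1 else 0

/-- The Dynkin index i = 2s ∈ ℤ/2n attached to s ∈ {1,…,n} (s 0-based in Fin n). -/
def iZ (n : ℕ) [NeZero n] (s : Fin n) : Zn n := ((2 * s.val + 2 : ℕ) : Zn n)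

/- ### Coefficients from Propositions 4.3–4.5 -/


def cD1 (n : ℕ) [NeZero n] (bl bm bj : Fin n → ℤ) (s : Fin n) : F := -(qq ^ (-(bj s) - bj (s+1) + bl s + bm (s+1) + 1) * qint (bj s))
def cD2 (n : ℕ) [NeZero n] (bl bm bj : Fin n → ℤ) (s : Fin n) : F := qint (bj s)
def cD3 (n : ℕ) [NeZero n] (bl bm bj : Fin n → ℤ) (s : Fin n) : F := -(qq ^ (-(bj s) - bj (s+1) + bl (s+1) + bm (s+1) + 1) * qint (bj (s+1)))
def cD4 (n : ℕ) [NeZero n] (bl bm bj : Fin n → ℤ) (s : Fin n) : F := qq ^ (-2 * bj s - 2 * bj (s+1) + bl s + bl (s+1) + 2 * bm (s+1) + 2) * qint (bj (s+1))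

def cB1 (n : ℕ) [NeZero n] (bl bm bj : Fin n → ℤ) (s : Fin n) : F := qq ^ (bj s - bj (s+1) - bm s + bm (s+1)) * qint (bl s - bj s)
def cB2 (n : ℕ) [NeZero n] (bl bm bj : Fin n → ℤ) (s : Fin n) : F := qint (bm s - bj s)
def cB3 (n : ℕ) [NeZero n] (bl bm bj : Fin n → ℤ) (s : Fin n) : F := -(qq ^ (bj s - bj (s+1) - bl s - bm s + bl (s+1) + bm (s+1)) * qint (bm s - bj s))
def cB4 (n : ℕ) [NeZero n] (bl bm bj : Fin n → ℤ) (s : Fin n) : F := -(qq ^ (2 * bj s - 2 * bj (s+1) - bl s - 2 * bm s + bl (s+1) + 2 * bm (s+1)) * qint (bl s - bj s))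

def cC1 (n : ℕ) [NeZero n] (bl bm bj : Fin n → ℤ) (s : Fin n) : F := -(qq ^ (-(bj s) + bj (s+1) + bl s - bl (s+1)) * qint (bm (s+1) - bj (s+1)))
def cC2 (n : ℕ) [NeZero n] (bl bm bj : Fin n → ℤ) (s : Fin n) : F := -qint (bl (s+1) - bj (s+1))
def cC3 (n : ℕ) [NeZero n] (bl bm bj : Fin n → ℤ) (s : Fin n) : F := qq ^ (-(bj s) + bj (s+1)) * qint (bl (s+1) - bj (s+1))
def cC4 (n : ℕ) [NeZero n] (bl bm bj : Fin n → ℤ) (s : Fin n) : F := qq ^ (-2 * bj s + 2 * bj (s+1) + bl s - bl (s+1)) * qint (bm (s+1) - bj (s+1))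

/-- The denominator N = [l_s+m_s-2j_s+1][l_{s+1}+m_{s+1}-2j_{s+1}+1]. -/
def cN (n : ℕ) [NeZero n] (bl bm bj : Fin n → ℤ) (s : Fin n) : F := qint (bl s + bm s - 2 * bj s + 1) * qint (bl (s+1) + bm (s+1) - 2 * bj (s+1) + 1)


/-- A_1 as a function of the six integers l_s, l_{s+1}, m_s, m_{s+1}, j_s, j_{s+1}. -/
def sA1 (ls ls1 ms ms1 js js1 : ℤ) : F :=
  qq ^ (js + js1 - ls1 - ms - 1) * qint (ls - js) * qint (ms1 - js1) * qint (ls + ms - js + 1)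
    / (qint (ls + ms - 2 * js + 1) * qint (ls1 + ms1 - 2 * js1 + 1))

def sA2 (ls ls1 ms ms1 js js1 : ℤ) : F :=
  -(qint (ls1 - js1) * qint (ms - js) * qint (ls + ms - js + 1))
    / (qint (ls + ms - 2 * js + 1) * qint (ls1 + ms1 - 2 * js1 + 1))

def sA3 (ls ls1 ms ms1 js js1 : ℤ) : F :=
  qq ^ (js + js1 - ls - ms - 1) * qint (ls1 - js1) * qint (ms - js) * qint (ls1 + ms1 - js1 + 1)
    / (qint (ls + ms - 2 * js + 1) * qint (ls1 + ms1 - 2 * js1 + 1))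

def sA4 (ls ls1 ms ms1 js js1 : ℤ) : F :=
  -(qq ^ (2 * js + 2 * js1 - ls - ls1 - 2 * ms - 2) * qint (ls - js) * qint (ms1 - js1)
      * qint (ls1 + ms1 - js1 + 1))
    / (qint (ls + ms - 2 * js + 1) * qint (ls1 + ms1 - 2 * js1 + 1))


def cA1 (n : ℕ) [NeZero n] (bl bm bj : Fin n → ℤ) (s : Fin n) : F := sA1 (bl s) (bl (s+1)) (bm s) (bm (s+1)) (bj s) (bj (s+1))
def cA2 (n : ℕ) [NeZero n] (bl bm bj : Fin n → ℤ) (s : Fin n) : F := sA2 (bl s) (bl (s+1)) (bm s) (bm (s+1)) (bj s) (bj (s+1))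
def cA3 (n : ℕ) [NeZero n] (bl bm bj : Fin n → ℤ) (s : Fin n) : F := sA3 (bl s) (bl (s+1)) (bm s) (bm (s+1)) (bj s) (bj (s+1))
def cA4 (n : ℕ) [NeZero n] (bl bm bj : Fin n → ℤ) (s : Fin n) : F := sA4 (bl s) (bl (s+1)) (bm s) (bm (s+1)) (bj s) (bj (s+1))

def cBB1 (n : ℕ) [NeZero n] (bl bm bj : Fin n → ℤ) (s : Fin n) : F := cB1 n bl bm bj s * qint (bl s + bm s - bj s + 1)
  * qint (bl (s+1) + bm (s+1) - 2 * bj (s+1)) / cN n bl bm bj s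
def cBB2 (n : ℕ) [NeZero n] (bl bm bj : Fin n → ℤ) (s : Fin n) : F := cB2 n bl bm bj s * qint (bl s + bm s - bj s + 1)
  * qint (bl (s+1) + bm (s+1) - 2 * bj (s+1)) / cN n bl bm bj s
def cBB3 (n : ℕ) [NeZero n] (bl bm bj : Fin n → ℤ) (s : Fin n) : F := cB3 n bl bm bj s * qint (bj (s+1))
  * qint (bl (s+1) + bm (s+1) - 2 * bj (s+1)) / cN n bl bm bj s
def cBB4 (n : ℕ) [NeZero n] (bl bm bj : Fin n → ℤ) (s : Fin n) : F := cB4 n bl bm bj s * qint (bj (s+1))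
  * qint (bl (s+1) + bm (s+1) - 2 * bj (s+1)) / cN n bl bm bj s

def cCC1 (n : ℕ) [NeZero n] (bl bm bj : Fin n → ℤ) (s : Fin n) : F := cC1 n bl bm bj s * qint (bj s) * qint (bl s + bm s - 2 * bj s) / cN n bl bm bj s
def cCC2 (n : ℕ) [NeZero n] (bl bm bj : Fin n → ℤ) (s : Fin n) : F := cC2 n bl bm bj s * qint (bj s) * qint (bl s + bm s - 2 * bj s) / cN n bl bm bj s
def cCC3 (n : ℕ) [NeZero n] (bl bm bj : Fin n → ℤ) (s : Fin n) : F := cC3 n bl bm bj s * qint (bl s + bm s - 2 * bj s)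
  * qint (bl (s+1) + bm (s+1) - bj (s+1) + 1) / cN n bl bm bj s
def cCC4 (n : ℕ) [NeZero n] (bl bm bj : Fin n → ℤ) (s : Fin n) : F := cC4 n bl bm bj s * qint (bl s + bm s - 2 * bj s)
  * qint (bl (s+1) + bm (s+1) - bj (s+1) + 1) / cN n bl bm bj s

def cDD1 (n : ℕ) [NeZero n] (bl bm bj : Fin n → ℤ) (s : Fin n) : F := cD1 n bl bm bj s * qint (bl s + bm s - 2 * bj s)
  * qint (bl (s+1) + bm (s+1) - 2 * bj (s+1)) / cN n bl bm bj s
def cDD2 (n : ℕ) [NeZero n] (bl bm bj : Fin n → ℤ) (s : Fin n) : F := cD2 n bl bm bj s * qint (bl s + bm s - 2 * bj s)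
  * qint (bl (s+1) + bm (s+1) - 2 * bj (s+1)) / cN n bl bm bj s
def cDD3 (n : ℕ) [NeZero n] (bl bm bj : Fin n → ℤ) (s : Fin n) : F := cD3 n bl bm bj s * qint (bl s + bm s - 2 * bj s)
  * qint (bl (s+1) + bm (s+1) - 2 * bj (s+1)) / cN n bl bm bj s
def cDD4 (n : ℕ) [NeZero n] (bl bm bj : Fin n → ℤ) (s : Fin n) : F := cD4 n bl bm bj s * qint (bl s + bm s - 2 * bj s)
  * qint (bl (s+1) + bm (s+1) - 2 * bj (s+1)) / cN n bl bm bj s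


/-- The entry of the matrix C of Proposition 4.8, for row data (s, 𝒍, 𝒎, 𝒋)
and column data (𝒍', 𝒎', 𝒋'). -/
def Centry (n : ℕ) [NeZero n] (s : Fin n) (bl bm bj bl' bm' bj' : Fin n → ℤ) : F :=
  if bl' = bl - eun n s + eun n (s + 1) ∧ bm' = bm ∧ bj' = bj + eun n (s + 1) then
    cA1 n bl bm bj s
  else if bl' = bl ∧ bm' = bm - eun n s + eun n (s + 1) ∧ bj' = bj + eun n (s + 1) then
    cA2 n bl bm bj s
  else if bl' = bl + eun n s - eun n (s + 1) ∧ bm' = bm ∧ bj' = bj + eun n s then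
    cA3 n bl bm bj s
  else if bl' = bl ∧ bm' = bm + eun n s - eun n (s + 1) ∧ bj' = bj + eun n s then
    cA4 n bl bm bj s
  else 0

/-- f ∈ ℚ(q) is regular at q = 0 and vanishes there (i.e. f ∈ qA). -/
def vanishesAt0 (f : F) : Prop :=
  ∃ a b : Polynomial ℚ, Polynomial.eval 0 b ≠ 0 ∧ Polynomial.eval 0 a = 0 ∧
    f = algebraMap (Polynomial ℚ) F a / algebraMap (Polynomial ℚ) F b

/-
Write `a, b, c` for `e_{i-1}, e_i, e_{i+1}`. As `a` and `c` commute, the cubic part of `b_i`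
factors as `S = a T - q⁻¹ T a` with `T = c b - q⁻¹ b c`, and the `q`-Serre relation between
`c` and `b` says exactly `c T = q T c`; hence `c S = q S c`. The factor `q` is absorbed by
`k_i⁻¹ c = q c k_i⁻¹`, and `c` commutes with `f_i`, so `c` commutes with `b_i`. Exchanging `a`
and `c` leaves `S` unchanged, which gives the case of `a`.

On `V_{l,x}` and on `V^*_{l,x}` every `e_j`, `f_j` is a weighted shift
`v_α ↦ w [α_p] v_{α - e_p + e_m}` moving one unit between adjacent entries, and `k_i⁻¹` is
diagonal, so all these relations reduce to identities between `q`-integers, the only nontrivial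
one being `[m - 1] + [m + 1] = [2] [m]`.
-/

theorem qq_ne_zero : qq ≠ 0 := RatFunc.X_ne_zero

theorem qint_zero : qint 0 = 0 := by simp [qint]

theorem qint_sub_one_add_qint_add_one (m : ℤ) :
    qint (m - 1) + qint (m + 1) = (qq + qq⁻¹) * qint m := by
  simp only [qint, zpow_sub₀ qq_ne_zero, zpow_add₀ qq_ne_zero, zpow_neg, zpow_one, neg_sub,
    neg_add, ← add_div, mul_div_assoc']
  congr 1
  field_simp
  ring

section CubicTerm

variable {K A : Type*} [Field K] [Ring A] [Algebra K A]

def QSerre (q : K) (c b : A) : Prop :=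
  c * (c * b) - (q + q⁻¹) • (c * (b * c)) + b * (c * c) = 0

def cubicTerm (q : K) (a b c : A) : A :=
  c * (a * b) + (-q⁻¹) • (c * (b * a) + a * (b * c)) + q ^ (-2 : ℤ) • (b * (a * c))

theorem cubicTerm_swap {q : K} {a b c : A} (hac : Commute a c) :
    cubicTerm q c b a = cubicTerm q a b c := by
  simp only [cubicTerm, ← mul_assoc, hac.eq, add_comm (a * b * c)]

theorem cubicTerm_eq_of_commute {q : K} {a b c : A} (hac : Commute a c) :
    cubicTerm q a b c = a * (c * b - q⁻¹ • (b * c)) - q⁻¹ • ((c * b - q⁻¹ • (b * c)) * a) := by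
  have h₁ : a * (c * b) = c * (a * b) := by rw [← mul_assoc, hac.eq, mul_assoc]
  have h₂ : b * c * a = b * (a * c) := by rw [mul_assoc, hac.eq]
  simp only [cubicTerm, mul_sub, sub_mul, mul_smul_comm, smul_mul_assoc, h₁, h₂, mul_assoc,
    zpow_neg, zpow_two, mul_inv]
  module

theorem QSerre.mul_qCommutator {q : K} (hq : q ≠ 0) {b c : A} (hserre : QSerre q c b) :
    c * (c * b - q⁻¹ • (b * c)) = q • ((c * b - q⁻¹ • (b * c)) * c) := by
  unfold QSerre at hserre
  rw [← sub_eq_zero, ← hserre]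
  simp only [mul_sub, sub_mul, mul_smul_comm, smul_mul_assoc, smul_sub, smul_smul, add_smul,
    mul_assoc, mul_inv_cancel₀ hq, one_smul]
  abel

theorem mul_cubicTerm {q : K} (hq : q ≠ 0) {a b c : A} (hac : Commute a c)
    (hserre : QSerre q c b) : c * cubicTerm q a b c = q • (cubicTerm q a b c * c) := by
  have hcT := hserre.mul_qCommutator hq
  rw [cubicTerm_eq_of_commute hac]
  generalize c * b - q⁻¹ • (b * c) = T at hcT ⊢
  calc c * (a * T - q⁻¹ • (T * a))
      = a * (c * T) - q⁻¹ • ((c * T) * a) := by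
        rw [mul_sub, mul_smul_comm, ← mul_assoc, ← mul_assoc, ← hac.eq, mul_assoc]
    _ = q • ((a * T - q⁻¹ • (T * a)) * c) := by
        rw [hcT, smul_mul_assoc, mul_assoc T, ← hac.eq, ← mul_assoc]
        simp only [mul_smul_comm, smul_mul_assoc, smul_sub, sub_mul, mul_assoc]
        module

theorem commute_add_smul_cubicTerm_mul {q : K} (hq : q ≠ 0) (γ : K) {a b c f k : A}
    (hac : Commute a c) (hserre : QSerre q c b) (hk : k * c = q • (c * k)) (hf : Commute c f) :
    Commute c (f + γ • (cubicTerm q a b c * k)) := by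
  refine hf.add_right (Commute.smul_right ?_ γ)
  rw [Commute, SemiconjBy, ← mul_assoc, mul_cubicTerm hq hac hserre, mul_assoc, hk,
    smul_mul_assoc, mul_smul_comm, mul_assoc]

end CubicTerm

theorem natCast_ne_zero_Zn {n k : ℕ} (h0 : 0 < k) (hk : k < 2 * n) : (k : Zn n) ≠ 0 := by
  rw [Ne, ZMod.natCast_eq_zero_iff]
  exact fun h => absurd (Nat.le_of_dvd h0 h) (by omega)

theorem Zn.consecutive_ne {n : ℕ} (hn : 2 ≤ n) (i : Zn n) :
    i - 1 ≠ i ∧ i - 1 ≠ i + 1 ∧ i - 1 ≠ i + 1 + 1 ∧ i ≠ i + 1 ∧ i ≠ i + 1 + 1 ∧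
      i + 1 ≠ i + 1 + 1 := by
  have h₁ : ((1 : ℕ) : Zn n) ≠ 0 := natCast_ne_zero_Zn one_pos (by omega)
  have h₂ : ((2 : ℕ) : Zn n) ≠ 0 := natCast_ne_zero_Zn two_pos (by omega)
  have h₃ : ((3 : ℕ) : Zn n) ≠ 0 := natCast_ne_zero_Zn three_pos (by omega)
  push_cast at h₁ h₂ h₃
  refine ⟨fun h => h₁ ?_, fun h => h₂ ?_, fun h => h₃ ?_, fun h => h₁ ?_, fun h => h₂ ?_,
    fun h => h₁ ?_⟩ <;> linear_combination -h

section WeightedShift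

variable {n l : ℕ} [NeZero n]

theorem eu_apply (j k : Zn n) : eu n j k = if k = j then 1 else 0 := rfl

theorem inB_sub_eu_add_eu {α : Zn n → ℤ} (hα : inB n l α) {p m : Zn n}
    (hp : p = m ∨ 1 ≤ α p) : inB n l (α - eu n p + eu n m) := by
  refine ⟨fun k => ?_, ?_⟩
  · have := hα.1 k
    simp only [Pi.add_apply, Pi.sub_apply, eu_apply]
    split_ifs <;> grind
  · simp [Finset.sum_add_distrib, Finset.sum_sub_distrib, eu, hα.2]

theorem linearMap_ext_vB {f g : V n l →ₗ[F] V n l}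
    (h : ∀ α, inB n l α → f (vB n l α) = g (vB n l α)) : f = g := by
  refine Finsupp.lhom_ext fun ⟨α, hα⟩ t => ?_
  have hsingle : Finsupp.single (⟨α, hα⟩ : {β // inB n l β}) t = t • vB n l α := by
    rw [vB, dif_pos hα, Finsupp.smul_single, smul_eq_mul, mul_one]
  rw [hsingle, map_smul, map_smul, h α hα]

theorem opOf_vB (c : (Zn n → ℤ) → F) (sh : (Zn n → ℤ) → Zn n → ℤ) {α : Zn n → ℤ}
    (hα : inB n l α) : opOf n l c sh (vB n l α) = c α • vB n l (sh α) := by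
  simp [vB, dif_pos hα, opOf, Finsupp.lsum_single, LinearMap.toSpanSingleton_apply]

variable (n l) in
/-- The field `coeff_eq_zero` makes `toEnd` multiplicative in spite of the convention
`v_β = 0` for `β ∉ B_l`: a composite never passes through such a `β` with nonzero weight. -/
structure WShift where
  coeff : (Zn n → ℤ) → F
  shift : (Zn n → ℤ) → Zn n → ℤ
  coeff_eq_zero : ∀ α, inB n l α → ¬ inB n l (shift α) → coeff α = 0

namespace WShift

def toEnd (w : WShift n l) : Module.End F (V n l) := opOf n l w.coeff w.shift

instance : Mul (WShift n l) where
  mul w₁ w₂ :=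
    { coeff := fun α => w₂.coeff α * w₁.coeff (w₂.shift α)
      shift := fun α => w₁.shift (w₂.shift α)
      coeff_eq_zero := fun α hα hout => by
        by_cases hmid : inB n l (w₂.shift α)
        · rw [w₁.coeff_eq_zero _ hmid hout, mul_zero]
        · rw [w₂.coeff_eq_zero α hα hmid, zero_mul] }

@[simp] theorem mul_coeff (w₁ w₂ : WShift n l) (α : Zn n → ℤ) :
    (w₁ * w₂).coeff α = w₂.coeff α * w₁.coeff (w₂.shift α) := rfl

@[simp] theorem mul_shift (w₁ w₂ : WShift n l) (α : Zn n → ℤ) :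
    (w₁ * w₂).shift α = w₁.shift (w₂.shift α) := rfl

theorem toEnd_vB (w : WShift n l) {α : Zn n → ℤ} (hα : inB n l α) :
    w.toEnd (vB n l α) = w.coeff α • vB n l (w.shift α) :=
  opOf_vB _ _ hα

theorem toEnd_mul (w₁ w₂ : WShift n l) : (w₁ * w₂).toEnd = w₁.toEnd * w₂.toEnd := by
  refine linearMap_ext_vB fun α hα => ?_
  rw [Module.End.mul_apply, toEnd_vB _ hα, toEnd_vB _ hα, map_smul]
  by_cases hmid : inB n l (w₂.shift α)
  · rw [toEnd_vB _ hmid, smul_smul, mul_coeff, mul_shift]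
  · simp only [mul_coeff, w₂.coeff_eq_zero α hα hmid, zero_mul, zero_smul]

theorem toEnd_eq_smul {w₁ w₂ : WShift n l} (t : F) (hs : ∀ α, w₁.shift α = w₂.shift α)
    (hc : ∀ α, inB n l α → w₁.coeff α = t * w₂.coeff α) : w₁.toEnd = t • w₂.toEnd := by
  refine linearMap_ext_vB fun α hα => ?_
  rw [LinearMap.smul_apply, toEnd_vB _ hα, toEnd_vB _ hα, hs, hc α hα, smul_smul]

theorem toEnd_eq {w₁ w₂ : WShift n l} (hs : ∀ α, w₁.shift α = w₂.shift α)
    (hc : ∀ α, inB n l α → w₁.coeff α = w₂.coeff α) : w₁.toEnd = w₂.toEnd := by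
  simpa using toEnd_eq_smul 1 hs (by simpa using hc)

theorem toEnd_sub_smul_add_eq_zero {w₁ w₂ w₃ : WShift n l} (t : F)
    (hs₂ : ∀ α, w₂.shift α = w₁.shift α) (hs₃ : ∀ α, w₃.shift α = w₁.shift α)
    (hc : ∀ α, inB n l α → w₁.coeff α - t * w₂.coeff α + w₃.coeff α = 0) :
    w₁.toEnd - t • w₂.toEnd + w₃.toEnd = 0 := by
  refine linearMap_ext_vB fun α hα => ?_
  simp only [LinearMap.add_apply, LinearMap.sub_apply, LinearMap.smul_apply, toEnd_vB _ hα,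
    hs₂, hs₃, smul_smul, ← sub_smul, ← add_smul, hc α hα, zero_smul, LinearMap.zero_apply]

def hop (w : F) (p m : Zn n) : WShift n l where
  coeff α := w * qint (α p)
  shift α := α - eu n p + eu n m
  coeff_eq_zero α hα hout := by
    have hp : α p = 0 := by
      by_contra h
      exact hout (inB_sub_eu_add_eu hα (.inr (by have := hα.1 p; omega)))
    rw [hp, qint_zero, mul_zero]

def diagonal (φ : (Zn n → ℤ) → ℤ) : WShift n l where
  coeff α := qq ^ φ α
  shift α := α
  coeff_eq_zero _ hα hout := absurd hα hout

theorem commute_hop (w w' : F) {p m p' m' : Zn n} (hpm' : p ≠ m') (hp'm : p' ≠ m) :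
    Commute (hop (l := l) w p m).toEnd (hop w' p' m').toEnd := by
  rw [Commute, SemiconjBy, ← toEnd_mul, ← toEnd_mul]
  refine toEnd_eq (fun α => by simp only [mul_shift, hop]; abel) fun α _ => ?_
  simp only [mul_coeff, hop, Pi.add_apply, Pi.sub_apply, eu_apply, if_neg hpm', if_neg hp'm]
  rcases eq_or_ne p p' with rfl | hpp'
  · simp only [if_true]; ring
  · simp only [if_neg hpp', if_neg hpp'.symm, sub_zero, Int.add_zero]; ring

theorem qSerre_hop_to_hop_from (w w' : F) {p m r : Zn n} (hpm : p ≠ m) (hpr : p ≠ r) :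
    QSerre qq (hop (l := l) w p m).toEnd (hop w' m r).toEnd := by
  unfold QSerre
  simp only [← toEnd_mul]
  refine toEnd_sub_smul_add_eq_zero _ (fun α => by simp only [mul_shift, hop]; abel)
    (fun α => by simp only [mul_shift, hop]; abel) fun α _ => ?_
  simp only [mul_coeff, mul_shift, hop, Pi.add_apply, Pi.sub_apply, eu_apply, if_neg hpm,
    if_neg hpr, if_neg hpm.symm, if_true, sub_zero, add_zero]
  linear_combination (norm := ring_nf) (w ^ 2 * w' * qint (α p) * qint (α p - 1)) *
    qint_sub_one_add_qint_add_one (α m + 1)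

theorem qSerre_hop_from_hop_to (w w' : F) {p m r : Zn n} (hpm : p ≠ m) (hmr : m ≠ r)
    (hpr : p ≠ r) : QSerre qq (hop (l := l) w' m r).toEnd (hop w p m).toEnd := by
  unfold QSerre
  simp only [← toEnd_mul]
  refine toEnd_sub_smul_add_eq_zero _ (fun α => by simp only [mul_shift, hop]; abel)
    (fun α => by simp only [mul_shift, hop]; abel) fun α _ => ?_
  simp only [mul_coeff, mul_shift, hop, Pi.add_apply, Pi.sub_apply, eu_apply, if_neg hpm,
    if_neg hmr, if_neg hpr, if_neg hpm.symm, if_true, sub_zero, add_zero]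
  linear_combination (norm := ring_nf) (w * w' ^ 2 * qint (α p) * qint (α m)) *
    qint_sub_one_add_qint_add_one (α m)

theorem diagonal_mul_hop (φ : (Zn n → ℤ) → ℤ) (w : F) {p m : Zn n}
    (hφ : ∀ α, φ (α - eu n p + eu n m) = φ α + 1) :
    (diagonal (l := l) φ).toEnd * (hop w p m).toEnd =
      qq • ((hop w p m).toEnd * (diagonal φ).toEnd) := by
  rw [← toEnd_mul, ← toEnd_mul]
  refine toEnd_eq_smul _ (fun α => rfl) fun α _ => ?_
  simp only [mul_coeff, hop, diagonal, hφ, zpow_add_one₀ qq_ne_zero]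
  ring

end WShift

end WeightedShift

section Coideal

variable {n : ℕ} [NeZero n] {M : Type*} [AddCommGroup M] [Module F M]

theorem bOf_eq_add_cubicTerm (e f kinv : Zn n → Module.End F M) (γ : Zn n → F) (i : Zn n) :
    bOf n e f kinv γ i = f i + γ i • (cubicTerm qq (e (i - 1)) (e i) (e (i + 1)) * kinv i) :=
  rfl

theorem commute_bOf_succ {e f kinv : Zn n → Module.End F M} (γ : Zn n → F) {i : Zn n}
    (hac : Commute (e (i - 1)) (e (i + 1))) (hserre : QSerre qq (e (i + 1)) (e i))
    (hk : kinv i * e (i + 1) = qq • (e (i + 1) * kinv i)) (hf : Commute (e (i + 1)) (f i)) :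
    Commute (e (i + 1)) (bOf n e f kinv γ i) := by
  rw [bOf_eq_add_cubicTerm]
  exact commute_add_smul_cubicTerm_mul qq_ne_zero _ hac hserre hk hf

theorem commute_bOf_pred {e f kinv : Zn n → Module.End F M} (γ : Zn n → F) {i : Zn n}
    (hac : Commute (e (i - 1)) (e (i + 1))) (hserre : QSerre qq (e (i - 1)) (e i))
    (hk : kinv i * e (i - 1) = qq • (e (i - 1) * kinv i)) (hf : Commute (e (i - 1)) (f i)) :
    Commute (e (i - 1)) (bOf n e f kinv γ i) := by
  rw [bOf_eq_add_cubicTerm, ← cubicTerm_swap hac]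
  exact commute_add_smul_cubicTerm_mul qq_ne_zero _ hac.symm hserre hk hf

end Coideal

section Representations

variable {n : ℕ} [NeZero n] (l : ℕ)

open WShift

theorem eOp_eq_toEnd_hop (x : F) (j : Zn n) :
    eOp n l x j = (hop (if j = 0 then x else 1) (j + 1) j).toEnd := by
  rw [eOp, toEnd]
  congr 1
  funext α
  simp only [hop]
  abel

theorem fSOp_eq_toEnd_hop (x : F) (j : Zn n) :
    fSOp n l x j = (hop (if j = 0 then x⁻¹ else 1) (j + 1) j).toEnd := by
  rw [fSOp, toEnd]
  congr 1
  funext α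
  simp only [hop]
  abel

theorem commute_eOp_bOp (hn : 2 ≤ n) (x : F) (γ : Zn n → F) (i : Zn n) :
    Commute (eOp n l x (i + 1)) (bOp n l x γ i) ∧
      Commute (eOp n l x (i - 1)) (bOp n l x γ i) := by
  obtain ⟨h₀₁, h₀₂, h₀₃, h₁₂, h₁₃, h₂₃⟩ := Zn.consecutive_ne hn i
  have hf (j : Zn n) : fOp n l x j = (hop (if j = 0 then x⁻¹ else 1) j (j + 1)).toEnd := rfl
  have hk : kInvOp n l i = (diagonal fun α => -(α i - α (i + 1))).toEnd := rfl
  have hac : Commute (eOp n l x (i - 1)) (eOp n l x (i + 1)) := by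
    rw [eOp_eq_toEnd_hop, eOp_eq_toEnd_hop, sub_add_cancel]
    exact commute_hop _ _ h₁₂ h₀₃.symm
  refine ⟨commute_bOf_succ γ hac ?_ ?_ ?_, commute_bOf_pred γ hac ?_ ?_ ?_⟩ <;>
    simp only [eOp_eq_toEnd_hop, hf, hk, sub_add_cancel]
  · exact qSerre_hop_to_hop_from _ _ h₂₃.symm h₁₃.symm
  · refine diagonal_mul_hop _ _ fun α => ?_
    simp only [Pi.add_apply, Pi.sub_apply, eu_apply, h₁₂, h₁₃, h₂₃, ↓reduceIte, sub_zero,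
      add_zero]
    ring
  · exact commute_hop _ _ h₂₃.symm h₁₂
  · exact qSerre_hop_from_hop_to _ _ h₁₂.symm h₀₁.symm h₀₂.symm
  · refine diagonal_mul_hop _ _ fun α => ?_
    simp only [Pi.add_apply, Pi.sub_apply, eu_apply, h₀₁.symm, h₀₂.symm, h₁₂.symm, ↓reduceIte,
      sub_zero, add_zero]
    ring
  · exact commute_hop _ _ h₁₂ h₀₁.symm

theorem commute_eSOp_bSOp (hn : 2 ≤ n) (x : F) (γ : Zn n → F) (i : Zn n) :
    Commute (eSOp n l x (i + 1)) (bSOp n l x γ i) ∧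
      Commute (eSOp n l x (i - 1)) (bSOp n l x γ i) := by
  obtain ⟨h₀₁, h₀₂, h₀₃, h₁₂, h₁₃, h₂₃⟩ := Zn.consecutive_ne hn i
  have he (j : Zn n) : eSOp n l x j = (hop (if j = 0 then x else 1) j (j + 1)).toEnd := rfl
  have hk : kSInvOp n l i = (diagonal fun α => α i - α (i + 1)).toEnd := rfl
  have hac : Commute (eSOp n l x (i - 1)) (eSOp n l x (i + 1)) := by
    rw [he, he, sub_add_cancel]
    exact commute_hop _ _ h₀₃ h₁₂.symm
  refine ⟨commute_bOf_succ γ hac ?_ ?_ ?_, commute_bOf_pred γ hac ?_ ?_ ?_⟩ <;>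
    simp only [he, fSOp_eq_toEnd_hop, hk, sub_add_cancel]
  · exact qSerre_hop_from_hop_to _ _ h₁₂ h₂₃ h₁₃
  · refine diagonal_mul_hop _ _ fun α => ?_
    simp only [Pi.add_apply, Pi.sub_apply, eu_apply, h₁₂, h₁₃, h₂₃, ↓reduceIte, sub_zero,
      add_zero]
    ring
  · exact commute_hop _ _ h₁₂.symm h₂₃
  · exact qSerre_hop_to_hop_from _ _ h₀₁ h₀₂
  · refine diagonal_mul_hop _ _ fun α => ?_
    simp only [Pi.add_apply, Pi.sub_apply, eu_apply, h₀₁.symm, h₀₂.symm, h₁₂.symm, ↓reduceIte,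
      sub_zero, add_zero]
    ring
  · exact commute_hop _ _ h₀₁ h₁₂.symm

end Representations

theorem statement1_general (n l : ℕ) [NeZero n] (hn : 2 ≤ n) (x : F)
    (γ : Zn n → F) (i : Zn n) :
    eOp n l x (i + 1) ∘ₗ bOp n l x γ i = bOp n l x γ i ∘ₗ eOp n l x (i + 1)
  ∧ eOp n l x (i - 1) ∘ₗ bOp n l x γ i = bOp n l x γ i ∘ₗ eOp n l x (i - 1)
  ∧ eSOp n l x (i + 1) ∘ₗ bSOp n l x γ i = bSOp n l x γ i ∘ₗ eSOp n l x (i + 1)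
  ∧ eSOp n l x (i - 1) ∘ₗ bSOp n l x γ i = bSOp n l x γ i ∘ₗ eSOp n l x (i - 1) := by
  obtain ⟨hVsucc, hVpred⟩ := commute_eOp_bOp l hn x γ i
  obtain ⟨hSsucc, hSpred⟩ := commute_eSOp_bSOp l hn x γ i
  exact ⟨hVsucc, hVpred, hSsucc, hSpred⟩

/-- For every i ∈ ℤ/2n and every γ_i, the operator identities
e_{i±1} b_i = b_i e_{i±1} hold on V_{l,x} and on V^*_{l,x}. -/
theorem statement1 (n l : ℕ) [NeZero n] (hn : 2 ≤ n) (hl : 1 ≤ l) (x : F) (hx : x ≠ 0)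
    (γ : Zn n → F) (i : Zn n) :
    eOp n l x (i + 1) ∘ₗ bOp n l x γ i = bOp n l x γ i ∘ₗ eOp n l x (i + 1)
  ∧ eOp n l x (i - 1) ∘ₗ bOp n l x γ i = bOp n l x γ i ∘ₗ eOp n l x (i - 1)
  ∧ eSOp n l x (i + 1) ∘ₗ bSOp n l x γ i = bSOp n l x γ i ∘ₗ eSOp n l x (i + 1)
  ∧ eSOp n l x (i - 1) ∘ₗ bSOp n l x γ i = bSOp n l x γ i ∘ₗ eSOp n l x (i - 1) :=
  statement1_general n l hn x γ i

end AII
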